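/- arXiv:1405.1218 — 2 statements merged into one kernel-verified Lean document; each statement's English description precedes it below -/
import Mathlib

section
/- Let X be a real random variable with E X = 0, E X² < ∞, and let Y = X - X²/2, Z = X² - E X². Set δ₁₁ = E[X² 1{|X|>1}] and δ₁₂ = E[|X|³ 1{|X|≤1}]. Then E[Z² e^Y] ≤ 4 δ₁₁ + 2 δ₁₂ + 2 δ₁₁². -/
/-!
Write `m = E X²` and `a = E[X²; |X| ≤ 1]`, so that `m = a + δ₁₁`. On `{|X| ≤ 1}` we use
`e^Y ≤ e^{1/2} < 2`, whence `Z² e^Y ≤ 2 (X² - m)² ≤ 2m² + 2|X|³ - 4mX²`; on `{|X| > 1}` we use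
`x² e^{x - x²/2} ≤ 4`, whence `Z² e^Y ≤ 2m² + 4X²`. Integrating gives
`E[Z² e^Y] ≤ 2m² - 4ma + 2δ₁₂ + 4δ₁₁ = 4δ₁₁ + 2δ₁₂ + 2δ₁₁² - 2a²`.
-/

open MeasureTheory

namespace Real

lemma exp_sub_sq_half_le_two (x : ℝ) : exp (x - x ^ 2 / 2) ≤ 2 := by
  calc exp (x - x ^ 2 / 2) ≤ exp (log 2) :=
        exp_le_exp.2 (by nlinarith [log_two_gt_d9, sq_nonneg (x - 1)])
    _ = 2 := exp_log two_pos

/-- From `exp t ≥ 1 + t` at `t = x ^ 2 / 2 - x` and `1 + t - x ^ 2 / 4 = (1 - x / 2) ^ 2`. -/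
lemma sq_mul_exp_sub_sq_half_le_four (x : ℝ) : x ^ 2 * exp (x - x ^ 2 / 2) ≤ 4 := by
  have hquarter : x ^ 2 / 4 ≤ exp (x ^ 2 / 2 - x) := by
    nlinarith [add_one_le_exp (x ^ 2 / 2 - x), sq_nonneg (1 - x / 2)]
  have hinv : exp (x - x ^ 2 / 2) * exp (x ^ 2 / 2 - x) = 1 := by
    rw [← exp_add]; simp
  nlinarith [exp_pos (x - x ^ 2 / 2)]

lemma sq_sub_mul_exp_le_of_abs_le_one {x : ℝ} (hx : |x| ≤ 1) (m : ℝ) :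
    (x ^ 2 - m) ^ 2 * exp (x - x ^ 2 / 2) ≤ 2 * m ^ 2 + (2 * |x| ^ 3 - 4 * m * x ^ 2) := by
  have hx4 : x ^ 4 ≤ |x| ^ 3 := by
    rw [← Even.pow_abs ⟨2, rfl⟩]
    exact pow_le_pow_of_le_one (abs_nonneg x) hx (by norm_num)
  calc (x ^ 2 - m) ^ 2 * exp (x - x ^ 2 / 2) ≤ (x ^ 2 - m) ^ 2 * 2 :=
        mul_le_mul_of_nonneg_left (exp_sub_sq_half_le_two x) (sq_nonneg _)
    _ ≤ 2 * m ^ 2 + (2 * |x| ^ 3 - 4 * m * x ^ 2) := by nlinarith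

lemma sq_sub_mul_exp_le {m : ℝ} (hm : 0 ≤ m) (x : ℝ) :
    (x ^ 2 - m) ^ 2 * exp (x - x ^ 2 / 2) ≤ 2 * m ^ 2 + 4 * x ^ 2 := by
  have hquartic := mul_le_mul_of_nonneg_left (sq_mul_exp_sub_sq_half_le_four x) (sq_nonneg x)
  have hcross : 0 ≤ m * x ^ 2 * exp (x - x ^ 2 / 2) := by positivity
  nlinarith [exp_sub_sq_half_le_two x, sq_nonneg m]

end Real

section

variable {Ω : Type*} [MeasurableSpace Ω] {μ : Measure Ω} {X : Ω → ℝ}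

lemma setIntegral_sq_sub_mul_exp_le_of_abs_le_one [IsFiniteMeasure μ] (hX : Measurable X)
    (hX2 : Integrable (fun ω => X ω ^ 2) μ) {s : Set Ω} (hs : MeasurableSet s)
    (hXs : ∀ ω ∈ s, |X ω| ≤ 1) (m : ℝ) :
    ∫ ω in s, (X ω ^ 2 - m) ^ 2 * Real.exp (X ω - X ω ^ 2 / 2) ∂μ ≤
      2 * m ^ 2 * μ.real s + (2 * ∫ ω in s, |X ω| ^ 3 ∂μ - 4 * m * ∫ ω in s, X ω ^ 2 ∂μ) := by
  have hcube : IntegrableOn (fun ω => |X ω| ^ 3) s μ := by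
    refine Integrable.mono' hX2.integrableOn (by fun_prop) ?_
    filter_upwards [ae_restrict_mem hs] with ω hω
    rw [Real.norm_eq_abs, abs_pow, abs_abs, ← sq_abs (X ω), pow_succ]
    exact mul_le_of_le_one_right (by positivity) (hXs ω hω)
  have hbound : IntegrableOn (fun ω => 2 * m ^ 2 + (2 * |X ω| ^ 3 - 4 * m * X ω ^ 2)) s μ :=
    (integrable_const _).add ((hcube.const_mul 2).sub (hX2.integrableOn.const_mul _))
  calc _ ≤ ∫ ω in s, 2 * m ^ 2 + (2 * |X ω| ^ 3 - 4 * m * X ω ^ 2) ∂μ := by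
        refine integral_mono_of_nonneg (ae_of_all _ fun ω => by positivity) hbound ?_
        filter_upwards [ae_restrict_mem hs] with ω hω
        exact Real.sq_sub_mul_exp_le_of_abs_le_one (hXs ω hω) m
    _ = _ := by
      rw [integral_add (integrable_const _) ?_, integral_sub ?_ ?_, setIntegral_const,
        integral_const_mul, integral_const_mul, smul_eq_mul, mul_comm (μ.real s)]
      exacts [hcube.const_mul 2, hX2.integrableOn.const_mul _,
        (hcube.const_mul 2).sub (hX2.integrableOn.const_mul _)]

lemma setIntegral_sq_sub_mul_exp_le [IsFiniteMeasure μ] (hX2 : Integrable (fun ω => X ω ^ 2) μ)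
    (s : Set Ω) {m : ℝ} (hm : 0 ≤ m) :
    ∫ ω in s, (X ω ^ 2 - m) ^ 2 * Real.exp (X ω - X ω ^ 2 / 2) ∂μ ≤
      2 * m ^ 2 * μ.real s + 4 * ∫ ω in s, X ω ^ 2 ∂μ := by
  calc _ ≤ ∫ ω in s, 2 * m ^ 2 + 4 * X ω ^ 2 ∂μ :=
        integral_mono_of_nonneg (ae_of_all _ fun ω => by positivity)
          ((integrable_const _).add (hX2.integrableOn.const_mul 4))
          (ae_of_all _ fun ω => Real.sq_sub_mul_exp_le hm (X ω))
    _ = _ := by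
      rw [integral_add (integrable_const _) (hX2.integrableOn.const_mul 4), setIntegral_const,
        integral_const_mul, smul_eq_mul, mul_comm (μ.real s)]

lemma integrable_sq_sub_mul_exp [IsFiniteMeasure μ] (hX : Measurable X)
    (hX2 : Integrable (fun ω => X ω ^ 2) μ) {m : ℝ} (hm : 0 ≤ m) :
    Integrable (fun ω => (X ω ^ 2 - m) ^ 2 * Real.exp (X ω - X ω ^ 2 / 2)) μ :=
  Integrable.mono' ((integrable_const (2 * m ^ 2)).add (hX2.const_mul 4)) (by fun_prop)
    (ae_of_all _ fun ω => by
      rw [Real.norm_of_nonneg (by positivity)]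
      exact Real.sq_sub_mul_exp_le hm (X ω))

end

theorem lemma_l3_b_general {Ω : Type*} [MeasurableSpace Ω] (μ : Measure Ω) [IsProbabilityMeasure μ]
    (X : Ω → ℝ) (hX : Measurable X) (hX2 : Integrable (fun ω => X ω ^ 2) μ)
    (Y Z : Ω → ℝ) (hY : ∀ ω, Y ω = X ω - X ω ^ 2 / 2)
    (hZ : ∀ ω, Z ω = X ω ^ 2 - ∫ ω, X ω ^ 2 ∂μ)
    (δ₁₁ δ₁₂ : ℝ) (hδ₁₁ : δ₁₁ = ∫ ω in {ω | 1 < |X ω|}, X ω ^ 2 ∂μ)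
    (hδ₁₂ : δ₁₂ = ∫ ω in {ω | |X ω| ≤ 1}, |X ω| ^ 3 ∂μ) :
    ∫ ω, Z ω ^ 2 * Real.exp (Y ω) ∂μ ≤ 4 * δ₁₁ + 2 * δ₁₂ + 2 * δ₁₁ ^ 2 := by
  set m := ∫ ω, X ω ^ 2 ∂μ
  set s := {ω | |X ω| ≤ 1}
  have hs : MeasurableSet s := measurableSet_le hX.abs measurable_const
  rw [show {ω | 1 < |X ω|} = sᶜ by ext; simp [s]] at hδ₁₁
  have hm : 0 ≤ m := integral_nonneg fun ω => sq_nonneg _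
  set a := ∫ ω in s, X ω ^ 2 ∂μ
  have hsplit : a + δ₁₁ = m := hδ₁₁ ▸ integral_add_compl hs hX2
  have hin := setIntegral_sq_sub_mul_exp_le_of_abs_le_one hX hX2 hs (fun ω hω => hω) m
  have hout := setIntegral_sq_sub_mul_exp_le hX2 sᶜ hm
  rw [← hδ₁₂] at hin
  rw [← hδ₁₁] at hout
  have hmass : 2 * m ^ 2 * μ.real s + 2 * m ^ 2 * μ.real sᶜ = 2 * m ^ 2 := by
    rw [← mul_add, measureReal_add_measureReal_compl hs, probReal_univ, mul_one]
  have hquad : 2 * m ^ 2 - 4 * m * a = 2 * δ₁₁ ^ 2 - 2 * a ^ 2 := by rw [← hsplit]; ring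
  simp only [hZ, hY]
  rw [← integral_add_compl hs (integrable_sq_sub_mul_exp hX hX2 hm)]
  linarith [sq_nonneg a]

theorem lemma_l3_b {Ω : Type*} [MeasurableSpace Ω] (μ : Measure Ω) [IsProbabilityMeasure μ]
    (X : Ω → ℝ) (hX : Measurable X) (hX2 : Integrable (fun ω => X ω ^ 2) μ)
    (hmean : ∫ ω, X ω ∂μ = 0)
    (Y Z : Ω → ℝ) (hY : ∀ ω, Y ω = X ω - X ω ^ 2 / 2)
    (hZ : ∀ ω, Z ω = X ω ^ 2 - ∫ ω, X ω ^ 2 ∂μ)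
    (δ₁₁ δ₁₂ : ℝ) (hδ₁₁ : δ₁₁ = ∫ ω in {ω | 1 < |X ω|}, X ω ^ 2 ∂μ)
    (hδ₁₂ : δ₁₂ = ∫ ω in {ω | |X ω| ≤ 1}, |X ω| ^ 3 ∂μ) :
    ∫ ω, Z ω ^ 2 * Real.exp (Y ω) ∂μ ≤ 4 * δ₁₁ + 2 * δ₁₂ + 2 * δ₁₁ ^ 2 :=
  lemma_l3_b_general μ X hX hX2 Y Z hY hZ δ₁₁ δ₁₂ hδ₁₁ hδ₁₂
end

section
/- Let X be a real random variable with E X = 0 and E X² < ∞, and let δ₁ = E[X² 1{|X|>1}] + E[|X|³ 1{|X|≤1}]. Then for Y = X - X²/2, one has e^{-5.5 δ₁} ≤ E[e^Y] ≤ e^{2.65 δ₁}. -/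
open MeasureTheory

/-!
With `g x = |x|³` for `|x| ≤ 1` and `g x = x²` otherwise, so that `δ₁ = E g(X)`, third-order
Taylor expansion (and crude bounds for `|x| > 1`) gives `|exp (x - x²/2) - 1 - x| ≤ g x`.
Taking expectations, `E X = 0` yields `|E e^Y - 1| ≤ δ₁`, which gives the upper bound and, for
`δ₁ ≤ 1/10`, the lower one. For `δ₁ > 1/10`, Jensen and `E X² ≤ δ₁ + 1` give
`E e^Y ≥ e^{E Y} = e^{-E X²/2} ≥ e^{-(δ₁ + 1)/2} ≥ e^{-5.5 δ₁}`.
-/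

namespace Real

lemma exp_le_quadratic_of_nonpos {t : ℝ} (ht : t ≤ 0) : exp t ≤ 1 + t + t ^ 2 / 2 := by
  have hderiv (s : ℝ) :
      HasDerivAt (fun s ↦ 1 + s + s ^ 2 / 2 - exp s) (1 + s - exp s) s :=
    ((((hasDerivAt_id' s).const_add 1).add ((hasDerivAt_pow 2 s).div_const 2)).sub
      (hasDerivAt_exp s)).congr_deriv (by norm_num)
  have hanti := antitone_of_hasDerivAt_nonpos hderiv fun s ↦
    show 1 + s - exp s ≤ 0 by linarith [add_one_le_exp s]
  simpa using hanti ht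

lemma cubic_le_exp_of_nonpos {t : ℝ} (ht : t ≤ 0) :
    1 + t + t ^ 2 / 2 + t ^ 3 / 6 ≤ exp t := by
  have hderiv (s : ℝ) : HasDerivAt (fun s ↦ exp s - (1 + s + s ^ 2 / 2 + s ^ 3 / 6))
      (exp s - (1 + s + s ^ 2 / 2)) s :=
    ((hasDerivAt_exp s).sub ((((hasDerivAt_id' s).const_add 1).add
      ((hasDerivAt_pow 2 s).div_const 2)).add ((hasDerivAt_pow 3 s).div_const 6))).congr_deriv
      (by norm_num; ring)
  have hanti : AntitoneOn (fun s ↦ exp s - (1 + s + s ^ 2 / 2 + s ^ 3 / 6)) (Set.Iic 0) :=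
    antitoneOn_of_hasDerivWithinAt_nonpos (convex_Iic 0) (by fun_prop)
      (fun s _ ↦ (hderiv s).hasDerivWithinAt) fun s hs ↦ by
        rw [interior_Iic] at hs
        linarith [exp_le_quadratic_of_nonpos hs.le]
  simpa using hanti ht Set.self_mem_Iic ht

lemma exp_le_cubic_of_nonneg_of_le_one {t : ℝ} (h0 : 0 ≤ t) (h1 : t ≤ 1) :
    exp t ≤ 1 + t + t ^ 2 / 2 + 2 / 9 * t ^ 3 := by
  have := exp_bound' h0 h1 (n := 3) (by norm_num)
  norm_num [Finset.sum_range_succ, Nat.factorial] at this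
  linarith

end Real

open Real

noncomputable def truncatedCube (x : ℝ) : ℝ := if |x| ≤ 1 then |x| ^ 3 else x ^ 2

lemma truncatedCube_nonneg (x : ℝ) : 0 ≤ truncatedCube x := by
  unfold truncatedCube; split_ifs <;> positivity

lemma truncatedCube_le_sq (x : ℝ) : truncatedCube x ≤ x ^ 2 := by
  unfold truncatedCube
  split_ifs with h
  · rw [← sq_abs x]
    nlinarith [abs_nonneg x, sq_nonneg |x|]
  · exact le_rfl

lemma sq_le_truncatedCube_add_one (x : ℝ) : x ^ 2 ≤ truncatedCube x + 1 := by
  unfold truncatedCube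
  split_ifs with h
  · rw [← sq_abs x]
    nlinarith [abs_nonneg x, pow_nonneg (abs_nonneg x) 3]
  · linarith

lemma measurable_truncatedCube : Measurable truncatedCube :=
  Measurable.ite (measurableSet_le continuous_abs.measurable measurable_const) (by fun_prop)
    (by fun_prop)

lemma exp_sub_sq_div_two_le (x : ℝ) : exp (x - x ^ 2 / 2) ≤ 1 + x + truncatedCube x := by
  unfold truncatedCube
  split_ifs with h
  · rcases le_or_gt 0 x with hx | hx
    · rw [abs_of_nonneg hx]
      have hx1 : x ≤ 1 := (abs_le.1 h).2
      have ht : 0 ≤ x - x ^ 2 / 2 := by nlinarith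
      have htx : x - x ^ 2 / 2 ≤ x := by nlinarith
      have := exp_le_cubic_of_nonneg_of_le_one ht (by linarith)
      nlinarith [pow_le_pow_left₀ ht htx 3, pow_nonneg hx 3]
    · rw [abs_of_neg hx]
      have hx1 : -1 ≤ x := (abs_le.1 h).1
      have := exp_le_quadratic_of_nonpos (t := x - x ^ 2 / 2) (by nlinarith)
      nlinarith [pow_nonneg (neg_nonneg.2 hx.le) 3]
  · rcases le_or_gt 0 x with hx | hx
    · have hx1 : 1 < x := by rw [abs_of_nonneg hx] at h; exact not_le.1 h
      have hhalf : exp (1 / 2) ≤ 5 / 3 := by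
        have := exp_le_two_add_div_two_sub (x := 1 / 2) (by norm_num) (by norm_num)
        norm_num at this ⊢
        linarith
      have := exp_le_exp.2 (show x - x ^ 2 / 2 ≤ 1 / 2 by nlinarith [sq_nonneg (x - 1)])
      nlinarith
    · have hx1 : x < -1 := by rw [abs_of_neg hx] at h; linarith
      have := exp_le_one_iff.2 (show x - x ^ 2 / 2 ≤ 0 by nlinarith)
      nlinarith

lemma one_add_sub_truncatedCube_le_exp (x : ℝ) :
    1 + x - truncatedCube x ≤ exp (x - x ^ 2 / 2) := by
  unfold truncatedCube
  split_ifs with h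
  · rcases le_or_gt 0 x with hx | hx
    · rw [abs_of_nonneg hx]
      have hx1 : x ≤ 1 := (abs_le.1 h).2
      have := quadratic_le_exp_of_nonneg (x := x - x ^ 2 / 2) (by nlinarith)
      nlinarith [pow_nonneg hx 3, pow_nonneg hx 4]
    · rw [abs_of_neg hx]
      have hx1 : -1 ≤ x := (abs_le.1 h).1
      have := cubic_le_exp_of_nonpos (t := x - x ^ 2 / 2) (by nlinarith)
      nlinarith [pow_nonneg (neg_nonneg.2 hx.le) 3, pow_nonneg (neg_nonneg.2 hx.le) 4,
        pow_nonneg (neg_nonneg.2 hx.le) 5, pow_nonneg (neg_nonneg.2 hx.le) 6]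
  · nlinarith [add_one_le_exp (x - x ^ 2 / 2)]

lemma abs_exp_sub_sq_div_two_sub_one_sub_le (x : ℝ) :
    |exp (x - x ^ 2 / 2) - 1 - x| ≤ truncatedCube x := by
  rw [abs_le]
  constructor <;> linarith [exp_sub_sq_div_two_le x, one_add_sub_truncatedCube_le_exp x]

lemma exp_neg_mul_le_max {δ : ℝ} (hδ : 0 ≤ δ) :
    exp (-5.5 * δ) ≤ max (1 - δ) (exp (-(δ + 1) / 2)) := by
  rcases le_or_gt δ (1 / 10) with hsmall | hlarge
  · refine le_max_of_le_left ((exp_le_quadratic_of_nonpos (by linarith)).trans ?_)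
    nlinarith
  · exact le_max_of_le_right (exp_le_exp.2 (by linarith))

section

variable {Ω : Type*} [MeasurableSpace Ω] {μ : Measure Ω} {X : Ω → ℝ}

lemma integral_truncatedCube_comp (hX : Measurable X)
    (hg : Integrable (fun ω ↦ truncatedCube (X ω)) μ) :
    ∫ ω, truncatedCube (X ω) ∂μ
      = (∫ ω in {ω | 1 < |X ω|}, X ω ^ 2 ∂μ) + ∫ ω in {ω | |X ω| ≤ 1}, |X ω| ^ 3 ∂μ := by
  have hs : MeasurableSet {ω | |X ω| ≤ 1} := measurableSet_le hX.abs measurable_const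
  rw [← integral_add_compl hs hg, add_comm]
  simp only [Set.compl_ofPred, not_le]
  congr 1
  · exact setIntegral_congr_fun (measurableSet_lt measurable_const hX.abs) fun ω hω ↦ by
      simp [truncatedCube, not_le.2 (show 1 < |X ω| from hω)]
  · exact setIntegral_congr_fun hs fun ω hω ↦ by simp [truncatedCube, show |X ω| ≤ 1 from hω]

lemma integrable_truncatedCube_comp (hX : Measurable X) (hX2 : Integrable (fun ω ↦ X ω ^ 2) μ) :
    Integrable (fun ω ↦ truncatedCube (X ω)) μ :=
  hX2.mono' (measurable_truncatedCube.comp hX).aestronglyMeasurable <| .of_forall fun ω ↦ by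
    rw [norm_of_nonneg (truncatedCube_nonneg _)]
    exact truncatedCube_le_sq _

variable [IsProbabilityMeasure μ]

lemma integrable_exp_sub_sq_div_two (hX : AEStronglyMeasurable X μ) :
    Integrable (fun ω ↦ exp (X ω - X ω ^ 2 / 2)) μ :=
  .of_bound (by fun_prop) (exp (1 / 2)) <| .of_forall fun ω ↦ by
    rw [norm_of_nonneg (exp_pos _).le, exp_le_exp]
    nlinarith [sq_nonneg (X ω - 1)]

lemma abs_integral_exp_sub_sq_div_two_sub_one_le (hX : Integrable X μ) (hmean : ∫ ω, X ω ∂μ = 0)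
    (hg : Integrable (fun ω ↦ truncatedCube (X ω)) μ) :
    |∫ ω, exp (X ω - X ω ^ 2 / 2) ∂μ - 1| ≤ ∫ ω, truncatedCube (X ω) ∂μ := by
  have hexp := integrable_exp_sub_sq_div_two hX.aestronglyMeasurable
  have hexp_sub : Integrable (fun ω ↦ exp (X ω - X ω ^ 2 / 2) - 1) μ :=
    hexp.sub (integrable_const 1)
  have hdiff : ∫ ω, (exp (X ω - X ω ^ 2 / 2) - 1 - X ω) ∂μ
      = ∫ ω, exp (X ω - X ω ^ 2 / 2) ∂μ - 1 := by
    rw [integral_sub hexp_sub hX, integral_sub hexp (integrable_const 1), hmean]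
    simp
  rw [← hdiff, ← norm_eq_abs]
  exact norm_integral_le_of_norm_le hg
    (.of_forall fun ω ↦ abs_exp_sub_sq_div_two_sub_one_sub_le (X ω))

lemma exp_neg_le_integral_exp_sub_sq_div_two (hX : Integrable X μ) (hmean : ∫ ω, X ω ∂μ = 0)
    (hX2 : Integrable (fun ω ↦ X ω ^ 2) μ) (hg : Integrable (fun ω ↦ truncatedCube (X ω)) μ) :
    exp (-(∫ ω, truncatedCube (X ω) ∂μ + 1) / 2) ≤ ∫ ω, exp (X ω - X ω ^ 2 / 2) ∂μ := by
  have hsecond : ∫ ω, X ω ^ 2 ∂μ ≤ ∫ ω, truncatedCube (X ω) ∂μ + 1 := by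
    have hg1 : Integrable (fun ω ↦ truncatedCube (X ω) + 1) μ := hg.add (integrable_const 1)
    have := integral_mono hX2 hg1 fun ω ↦ sq_le_truncatedCube_add_one (X ω)
    rwa [integral_add hg (integrable_const 1), integral_const, probReal_univ, one_smul] at this
  have hmeanY : ∫ ω, (X ω - X ω ^ 2 / 2) ∂μ = -(∫ ω, X ω ^ 2 ∂μ) / 2 := by
    rw [integral_sub hX (hX2.div_const 2), hmean, integral_div]
    ring
  have hY : Integrable (fun ω ↦ X ω - X ω ^ 2 / 2) μ := hX.sub (hX2.div_const 2)
  have hjensen := convexOn_exp.map_integral_le continuousOn_exp isClosed_univ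
    (.of_forall fun _ ↦ Set.mem_univ _) hY
    (integrable_exp_sub_sq_div_two hX.aestronglyMeasurable)
  refine le_trans (exp_le_exp.2 ?_) hjensen
  rw [hmeanY]
  linarith

end

theorem mgf_estimate {Ω : Type*} [MeasurableSpace Ω] (μ : Measure Ω) [IsProbabilityMeasure μ]
    (X : Ω → ℝ) (hX : Measurable X) (hX2 : Integrable (fun ω => X ω ^ 2) μ)
    (hmean : ∫ ω, X ω ∂μ = 0)
    (Y : Ω → ℝ) (hY : ∀ ω, Y ω = X ω - X ω ^ 2 / 2)
    (δ₁ : ℝ)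
    (hδ₁ : δ₁ = (∫ ω in {ω | 1 < |X ω|}, X ω ^ 2 ∂μ) + ∫ ω in {ω | |X ω| ≤ 1}, |X ω| ^ 3 ∂μ) :
    Real.exp (-5.5 * δ₁) ≤ ∫ ω, Real.exp (Y ω) ∂μ ∧
    ∫ ω, Real.exp (Y ω) ∂μ ≤ Real.exp (2.65 * δ₁) := by
  obtain rfl : Y = fun ω ↦ X ω - X ω ^ 2 / 2 := funext hY
  have hXi : Integrable X μ :=
    ((memLp_two_iff_integrable_sq hX.aestronglyMeasurable).2 hX2).integrable one_le_two
  have hg := integrable_truncatedCube_comp hX hX2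
  rw [← integral_truncatedCube_comp hX hg] at hδ₁
  subst hδ₁
  have hδ : 0 ≤ ∫ ω, truncatedCube (X ω) ∂μ := integral_nonneg fun ω ↦ truncatedCube_nonneg _
  have hclose := abs_le.1 (abs_integral_exp_sub_sq_div_two_sub_one_le hXi hmean hg)
  constructor
  · refine (exp_neg_mul_le_max hδ).trans (max_le (by linarith) ?_)
    exact exp_neg_le_integral_exp_sub_sq_div_two hXi hmean hX2 hg
  · linarith [add_one_le_exp (2.65 * ∫ ω, truncatedCube (X ω) ∂μ)]
end
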